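/- Let the normal index range be a single value a = b = 1 (hypersurface case, l = 1), with b_{pq} := b^1_{pq} symmetric and c^p_q := c^p_{1q}. If R^p_{qst} = b_{qs}c^p_t − b_{qt}c^p_s vanishes for all p,q,s,t, then R^1_{1st} = c^p_s b_{pt} − c^p_t b_{ps} also vanishes for all s,t. -/

import Mathlib

/-- The identity `R¹₁ₛₜ = -Rᵖₚₛₜ` between the normal curvature and the trace of the tangential one. -/
theorem sum_mul_sub_mul_eq_neg_sum_mul_sub_mul {R ι : Type*} [CommRing R] [Fintype ι]
    (b c : ι → ι → R) (s t : ι) :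
    ∑ p, (c p s * b p t - c p t * b p s) = -∑ p, (b p s * c p t - b p t * c p s) := by
  rw [← Finset.sum_neg_distrib]
  exact Finset.sum_congr rfl fun p _ => by ring

theorem stmt_7_general {K : Type*} [Field K] {r : ℕ}
    (b : Fin r → Fin r → K) (c : Fin r → Fin r → K)
    (hflat : ∀ p q s t : Fin r, b q s * c p t - b q t * c p s = 0) :
    ∀ s t : Fin r, (∑ p, (c p s * b p t - c p t * b p s)) = 0 := by
  intro s t
  rw [sum_mul_sub_mul_eq_neg_sum_mul_sub_mul, Finset.sum_eq_zero fun p _ => hflat p p s t,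
    neg_zero]

/-- Theorem 6: for a normalized hypersurface (l = 1), if the induced affine connection is
flat then the normal connection is flat. -/
theorem stmt_7 {K : Type*} [Field K] {r : ℕ}
    (b : Fin r → Fin r → K) (c : Fin r → Fin r → K)
    (hb : ∀ p q, b p q = b q p)
    (hflat : ∀ p q s t : Fin r, b q s * c p t - b q t * c p s = 0) :
    ∀ s t : Fin r, (∑ p, (c p s * b p t - c p t * b p s)) = 0 :=
  stmt_7_general b c hflat
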